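/- arXiv:2411.00307 — 8 statements merged into one kernel-verified Lean document; each statement's English description precedes it below -/
import Mathlib

section
/- Let n ≥ 1, let R be a finite commutative symmetric ℤ/n-algebra, and let S ⊆ R \ {0} be a subset with S = -S. Then the Cayley graph Γ(R,S) is integral (all eigenvalues of its adjacency matrix are integers) if and only if S is stable under the action of the unit group (ℤ/n)ˣ, i.e., u•s ∈ S for every u ∈ (ℤ/n)ˣ and every s ∈ S. -/
/-- A commutative `ZMod n`-algebra is *symmetric* if it admits an additive group
homomorphism `ψ : R →+ ZMod n` whose kernel contains no nonzero ideal of `R`. -/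
def IsSymmetricZModAlgebra (n : ℕ) (R : Type*) [CommRing R] [Algebra (ZMod n) R] : Prop :=
  ∃ ψ : R →+ ZMod n, ∀ I : Ideal R, (∀ x ∈ I, ψ x = 0) → I = ⊥

/-- Adjacency matrix (over ℂ) of the Cayley graph Γ(R,S):
`a` and `b` are adjacent iff `b - a ∈ S`. -/
noncomputable def cayleyAdj {R : Type*} [Ring R] (S : Set R) : Matrix R R ℂ :=
  fun a b => S.indicator (fun _ => (1 : ℂ)) (b - a)

/-- The Cayley graph Γ(R,S) is integral: every eigenvalue of its adjacency matrix
is a (rational) integer. -/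
def IsIntegralCayley {R : Type*} [Ring R] [Fintype R] (S : Set R) : Prop :=
  letI := Classical.decEq R
  spectrum ℂ (cayleyAdj S) ⊆ Set.range ((↑) : ℤ → ℂ)

/-!
Since `ψ` kills no nonzero ideal, `χ x = ζ ^ ψ x` (for a primitive `n`-th root of unity `ζ`) is a
primitive additive character of `R`, so the characters `x ↦ χ (r * x)` diagonalise every Cayley
graph on `R`: its eigenvalues are `λ_r(S) = ∑_{s ∈ S} χ (r * s)`. These are algebraic integers of
`ℚ(ζ)`, and the automorphism `ζ ↦ ζ ^ u` maps `λ_r(S)` to `λ_r(u • S)`. If `S` is stable, every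
`λ_r(S)` is Galois invariant, hence rational, hence an integer. Conversely, if all `λ_r(S)` are
integers they are Galois invariant, so `λ_r(u • S) = λ_r(S)` for all `r`, and Fourier inversion
(the character matrix is invertible) gives `u • S = S`.
-/

open Finset Matrix

section CharacterMatrix

variable {R F : Type*} [CommRing R] [Fintype R] [DecidableEq R] [Field F]

def AddChar.charMatrix (e : AddChar R F) : Matrix R R F := Matrix.of fun r x => e (r * x)

namespace AddChar

variable {e : AddChar R F}

theorem charMatrix_mul_charMatrix_inv (he : e.IsPrimitive) :
    e.charMatrix * e⁻¹.charMatrix = (Fintype.card R : F) • 1 := by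
  ext r r'
  have hprod : ∀ x, e (r * x) * e⁻¹ (x * r') = e (x * (r - r')) := fun x => by
    rw [inv_apply, ← map_add_eq_mul]; ring_nf
  simp only [charMatrix, Matrix.mul_apply, of_apply, hprod, sum_mulShift _ he, sub_eq_zero,
    Matrix.smul_apply, Matrix.one_apply, smul_eq_mul, mul_ite, mul_one, mul_zero, Nat.cast_ite,
    Nat.cast_zero]

theorem isUnit_charMatrix (he : e.IsPrimitive) (hR : (Fintype.card R : F) ≠ 0) :
    IsUnit e.charMatrix := by
  refine IsUnit.of_mul_eq_one ((Fintype.card R : F)⁻¹ • e⁻¹.charMatrix) ?_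
  rw [Matrix.mul_smul, charMatrix_mul_charMatrix_inv he, smul_smul, inv_mul_cancel₀ hR, one_smul]

theorem _root_.Finset.eq_of_forall_sum_addChar_mul_eq (he : e.IsPrimitive)
    (hR : (Fintype.card R : F) ≠ 0) {T T' : Finset R}
    (h : ∀ r, ∑ s ∈ T, e (r * s) = ∑ s ∈ T', e (r * s)) : T = T' := by
  have hmulVec : ∀ T : Finset R, e.charMatrix *ᵥ (fun x => if x ∈ T then 1 else 0) =
      fun r => ∑ s ∈ T, e (r * s) := fun T => by
    ext r; simp [charMatrix, mulVec, dotProduct, Finset.sum_ite_mem]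
  have := mulVec_injective_iff_isUnit.2 (isUnit_charMatrix he hR)
    ((hmulVec T).trans ((funext h).trans (hmulVec T').symm))
  ext x
  have hx := congrFun this x
  by_cases hxT : x ∈ T <;> by_cases hxT' : x ∈ T' <;> simp_all

end AddChar

end CharacterMatrix

section CayleyGraph

variable {R : Type*} [CommRing R] [Fintype R] [DecidableEq R]

theorem cayleyAdj_mul_charMatrix (e : AddChar R ℂ) (S : Set R) [DecidablePred (· ∈ S)] :
    cayleyAdj S * e.charMatrix =
      e.charMatrix * diagonal fun r => ∑ s ∈ S.toFinset, e (r * s) := by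
  ext a r
  rw [mul_diagonal, Finset.mul_sum, Matrix.mul_apply,
    ← Equiv.sum_comp (Equiv.addLeft a), ← Finset.sum_subset (Finset.subset_univ S.toFinset)]
  · refine Finset.sum_congr rfl fun s hs => ?_
    simp only [cayleyAdj, AddChar.charMatrix, of_apply, Equiv.coe_addLeft, add_sub_cancel_left,
      Set.indicator_of_mem (Set.mem_toFinset.1 hs), one_mul, ← AddChar.map_add_eq_mul]
    ring_nf
  · intro s _ hs
    simp [cayleyAdj, Set.indicator_of_notMem (fun h => hs (Set.mem_toFinset.2 h))]

theorem spectrum_cayleyAdj {e : AddChar R ℂ} (he : e.IsPrimitive) (S : Set R)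
    [DecidablePred (· ∈ S)] :
    spectrum ℂ (cayleyAdj S) = Set.range fun r => ∑ s ∈ S.toFinset, e (r * s) := by
  obtain ⟨P, hP⟩ := AddChar.isUnit_charMatrix he (Nat.cast_ne_zero.2 Fintype.card_ne_zero)
  have hconj : cayleyAdj S = P * diagonal (fun r => ∑ s ∈ S.toFinset, e (r * s)) *
      ((P⁻¹ : (Matrix R R ℂ)ˣ) : Matrix R R ℂ) := by
    rw [Units.eq_mul_inv_iff_mul_eq, hP, cayleyAdj_mul_charMatrix]
  rw [hconj, spectrum.units_conjugate, spectrum_diagonal]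

end CayleyGraph

section ZModChar

open AddChar Polynomial

variable {n : ℕ} [NeZero n]

theorem AddChar.IsPrimitive.compAddMonoidHom {C : Type*} [CommMonoid C]
    {e : AddChar (ZMod n) C} (he : e.IsPrimitive) {R : Type*} [CommRing R] {ψ : R →+ ZMod n}
    (hψ : ∀ I : Ideal R, (∀ x ∈ I, ψ x = 0) → I = ⊥) : (e.compAddMonoidHom ψ).IsPrimitive := by
  intro a ha htriv
  refine ha (Ideal.span_singleton_eq_bot.1 (hψ _ fun x hx => ?_))
  obtain ⟨c, rfl⟩ := Ideal.mem_span_singleton'.1 hx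
  rw [← he.zmod_char_eq_one_iff, mul_comm]
  simpa using DFunLike.congr_fun htriv c

theorem IsPrimitiveRoot.algEquiv_apply_zmodChar_comp {F L : Type*} [CommRing F] [CommRing L]
    [IsDomain L] [Algebra F L] {ζ : L} (hζ : IsPrimitiveRoot ζ n) (σ : L ≃ₐ[F] L)
    {M : Type*} [AddCommGroup M] [Module (ZMod n) M] (ψ : M →+ ZMod n) (x : M) :
    σ ((zmodChar n hζ.pow_eq_one).compAddMonoidHom ψ x) =
      (zmodChar n hζ.pow_eq_one).compAddMonoidHom ψ ((hζ.autToPow F σ : ZMod n) • x) := by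
  rw [compAddMonoidHom_apply, compAddMonoidHom_apply, ZMod.map_smul, smul_eq_mul,
    zmodChar_apply, zmodChar_apply, map_pow, ← hζ.autToPow_spec F σ, ← pow_mul, ZMod.val_mul,
    ← pow_eq_pow_mod _ hζ.pow_eq_one]

theorem IsPrimitiveRoot.algEquiv_apply_sum_zmodChar_comp {F L : Type*} [CommRing F] [CommRing L]
    [IsDomain L] [Algebra F L] {ζ : L} (hζ : IsPrimitiveRoot ζ n) (σ : L ≃ₐ[F] L)
    {R : Type*} [CommRing R] [DecidableEq R] [Module (ZMod n) R] [SMulCommClass (ZMod n) R R]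
    (ψ : R →+ ZMod n) (T : Finset R) (r : R) :
    σ (∑ s ∈ T, (zmodChar n hζ.pow_eq_one).compAddMonoidHom ψ (r * s)) =
      ∑ s ∈ T.image ((hζ.autToPow F σ : ZMod n) • ·),
        (zmodChar n hζ.pow_eq_one).compAddMonoidHom ψ (r * s) := by
  rw [map_sum, Finset.sum_image fun _ _ _ _ h => (hζ.autToPow F σ).isUnit.smul_left_cancel.1 h]
  simp only [hζ.algEquiv_apply_zmodChar_comp, mul_smul_comm]

theorem IsPrimitiveRoot.autToPow_surjective {F L : Type*} [Field F] [CommRing L] [IsDomain L]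
    [Algebra F L] [IsCyclotomicExtension {n} F L] (hirr : Irreducible (cyclotomic n F))
    {ζ : L} (hζ : IsPrimitiveRoot ζ n) : Function.Surjective (hζ.autToPow F) := by
  intro u
  obtain ⟨σ, hσ⟩ := (IsCyclotomicExtension.autEquivPow L hirr).surjective u
  refine ⟨σ, ?_⟩
  rw [IsPrimitiveRoot.autToPow_eq_modularCyclotomicCharacter n F hζ σ, ← hσ,
    IsCyclotomicExtension.autEquivPow_apply]
  exact (IsPrimitiveRoot.autToPow_eq_modularCyclotomicCharacter n F _ σ).symm

end ZModChar

theorem mem_range_intCast_of_isIntegral_of_forall_algEquiv_apply_eq {K : Type*} [Field K]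
    [Algebra ℚ K] [IsGalois ℚ K] [FiniteDimensional ℚ K] {x : K} (hx : IsIntegral ℤ x)
    (hfix : ∀ σ : K ≃ₐ[ℚ] K, σ x = x) :
    x ∈ Set.range ((↑) : ℤ → K) := by
  obtain ⟨q, rfl⟩ := IntermediateField.mem_bot.1 ((IsGalois.mem_bot_iff_fixed x).2 hfix)
  obtain ⟨m, rfl⟩ := IsIntegrallyClosed.isIntegral_iff.1
    ((isIntegral_algebraMap_iff (algebraMap ℚ K).injective).1 hx)
  exact ⟨m, by simp⟩

theorem map_mem_range_intCast_iff {A B F : Type*} [Ring A] [Ring B] [FunLike F A B]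
    [RingHomClass F A B] {f : F} (hf : Function.Injective f) {x : A} :
    f x ∈ Set.range ((↑) : ℤ → B) ↔ x ∈ Set.range ((↑) : ℤ → A) :=
  ⟨fun ⟨m, hm⟩ => ⟨m, hf (by rw [map_intCast, hm])⟩, fun ⟨m, hm⟩ => ⟨m, by rw [← hm, map_intCast]⟩⟩

open AddChar Polynomial Finset in
theorem forall_sum_zmodChar_comp_mem_range_intCast_iff {n : ℕ} [NeZero n] {K : Type*} [Field K]
    [Algebra ℚ K] [IsCyclotomicExtension {n} ℚ K] {ζ : K} (hζ : IsPrimitiveRoot ζ n)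
    {R : Type*} [CommRing R] [Fintype R] [DecidableEq R] [Algebra (ZMod n) R] {ψ : R →+ ZMod n}
    (hψ : ∀ I : Ideal R, (∀ x ∈ I, ψ x = 0) → I = ⊥) (T : Finset R) :
    (∀ r, ∑ s ∈ T, (zmodChar n hζ.pow_eq_one).compAddMonoidHom ψ (r * s) ∈
      Set.range ((↑) : ℤ → K)) ↔ ∀ u : (ZMod n)ˣ, ∀ s ∈ T, (u : ZMod n) • s ∈ T := by
  have := IsCyclotomicExtension.isGalois {n} ℚ K
  have := IsCyclotomicExtension.finiteDimensional {n} ℚ K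
  have he := (zmodChar_primitive_of_primitive_root n hζ).compAddMonoidHom hψ
  have hcard : (Fintype.card R : K) ≠ 0 := by
    simpa using (algebraMap ℚ K).injective.ne (Nat.cast_ne_zero.2 (Fintype.card_ne_zero (α := R)))
  constructor
  · intro hint u s hs
    obtain ⟨σ, rfl⟩ := hζ.autToPow_surjective (cyclotomic.irreducible_rat (NeZero.pos n)) u
    have himage : T.image ((hζ.autToPow ℚ σ : ZMod n) • ·) = T :=
      eq_of_forall_sum_addChar_mul_eq he hcard fun r => by
        obtain ⟨m, hm⟩ := hint r
        rw [← hζ.algEquiv_apply_sum_zmodChar_comp, ← hm, map_intCast]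
    exact himage ▸ mem_image_of_mem _ hs
  · intro hstab r
    refine mem_range_intCast_of_isIntegral_of_forall_algEquiv_apply_eq ?_ fun σ => ?_
    · exact IsIntegral.sum _ fun s _ => (hζ.isIntegral (NeZero.pos n)).pow _
    · have himage : T.image ((hζ.autToPow ℚ σ : ZMod n) • ·) = T :=
        eq_of_subset_of_card_le (image_subset_iff.2 (hstab _))
          (card_image_of_injective _ fun _ _ h => (hζ.autToPow ℚ σ).isUnit.smul_left_cancel.1 h).ge
      rw [hζ.algEquiv_apply_sum_zmodChar_comp, himage]

theorem integral_iff_stable_general (n : ℕ) (hn : 1 ≤ n) (R : Type*) [CommRing R] [Fintype R]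
    [Algebra (ZMod n) R] (hsym : IsSymmetricZModAlgebra n R)
    (S : Set R) :
    IsIntegralCayley S ↔ ∀ (u : (ZMod n)ˣ), ∀ s ∈ S, ((u : ZMod n) • s) ∈ S := by
  have : NeZero n := ⟨by omega⟩
  -- `CyclotomicField` is a cyclotomic extension for its own `ℚ`-algebra structure, which is not
  -- reducibly defeq to the one `CharZero` provides.
  let : Algebra ℚ (CyclotomicField n ℚ) := CyclotomicField.algebra n ℚ
  classical
  obtain ⟨ψ, hψ⟩ := hsym
  have hζ := IsCyclotomicExtension.zeta_spec n ℚ (CyclotomicField n ℚ)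
  let e := (AddChar.zmodChar n hζ.pow_eq_one).compAddMonoidHom ψ
  let φ : CyclotomicField n ℚ →ₐ[ℚ] ℂ := IsAlgClosed.lift
  have he : e.IsPrimitive :=
    (AddChar.zmodChar_primitive_of_primitive_root n hζ).compAddMonoidHom hψ
  have hφe : (φ.toMonoidHom.compAddChar e).IsPrimitive :=
    he.compMulHom_of_isPrimitive φ.injective
  calc IsIntegralCayley S
      ↔ ∀ r, φ (∑ s ∈ S.toFinset, e (r * s)) ∈ Set.range ((↑) : ℤ → ℂ) := by
        simp [IsIntegralCayley, spectrum_cayleyAdj hφe, Set.range_subset_iff]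
    _ ↔ ∀ r, ∑ s ∈ S.toFinset, e (r * s) ∈ Set.range ((↑) : ℤ → CyclotomicField n ℚ) :=
        forall_congr' fun _ => map_mem_range_intCast_iff φ.injective
    _ ↔ ∀ (u : (ZMod n)ˣ), ∀ s ∈ S.toFinset, ((u : ZMod n) • s) ∈ S.toFinset :=
        forall_sum_zmodChar_comp_mem_range_intCast_iff hζ hψ S.toFinset
    _ ↔ _ := by simp only [Set.mem_toFinset]

/-- Let `R` be a finite commutative symmetric `ZMod n`-algebra and `S ⊆ R \ {0}` with
`S = -S`. Then `Γ(R,S)` is integral iff `S` is stable under the action of `(ZMod n)ˣ`. -/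
theorem integral_iff_stable (n : ℕ) (hn : 1 ≤ n) (R : Type*) [CommRing R] [Fintype R]
    [Algebra (ZMod n) R] (hsym : IsSymmetricZModAlgebra n R)
    (S : Set R) (hS0 : S ⊆ {x : R | x ≠ 0}) (hSneg : S = -S) :
    IsIntegralCayley S ↔ ∀ (u : (ZMod n)ˣ), ∀ s ∈ S, ((u : ZMod n) • s) ∈ S :=
  integral_iff_stable_general n hn R hsym S
end

section
/- Let n ≥ 1, let R be a finite commutative symmetric ℤ/n-algebra with non-degenerate linear functional ψ : R → ℤ/n, let ζ ∈ ℂ be a primitive n-th root of unity, and let A_R be the R×R matrix over ℂ with entries A_R(r,t) = ζ^{ψ(r·t)}. If v : R → ℚ is a vector such that every entry of A_R v lies in ℚ (viewed inside ℂ), then A_R v is constant on the orbits of the (ℤ/n)ˣ-action on R: whenever r₂ = u•r₁ for some u ∈ (ℤ/n)ˣ, the r₁-entry and the r₂-entry of A_R v are equal. -/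
/-!
The entry of `A_R v` at `r` is the value at `ζ` of the rational polynomial
`P_r = ∑ t, v t * X ^ ψ (r * t)`, and since `ψ` is `ℤ/n`-linear the entry at `u • r` is the
value of the same polynomial at the conjugate `ζ ^ u`. Both roots have the cyclotomic
polynomial as minimal polynomial over `ℚ`, so `P_r` takes the same rational value at both.
-/

open Polynomial

theorem aeval_eq_algebraMap_of_aeval_minpoly_eq_zero {K L : Type*} [Field K] [CommRing L]
    [Algebra K L] {x y : L} (hy : aeval y (minpoly K x) = 0) {p : K[X]} {c : K}
    (hp : aeval x p = algebraMap K L c) : aeval y p = algebraMap K L c := by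
  obtain ⟨g, hg⟩ : minpoly K x ∣ p - C c := minpoly.dvd K x (by simp [hp])
  have : aeval y (p - C c) = 0 := by rw [hg, map_mul, hy, zero_mul]
  simpa [sub_eq_zero] using this

theorem IsPrimitiveRoot.aeval_pow_eq_of_aeval_eq_ratCast {K : Type*} [Field K] [CharZero K]
    {ζ : K} {n k : ℕ} (hζ : IsPrimitiveRoot ζ n) (hn : 0 < n) (hk : k.Coprime n) {p : ℚ[X]}
    {q : ℚ} (hp : aeval ζ p = q) : aeval (ζ ^ k) p = q := by
  have hminpoly : minpoly ℚ ζ = minpoly ℚ (ζ ^ k) := by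
    rw [← cyclotomic_eq_minpoly_rat hζ hn,
      ← cyclotomic_eq_minpoly_rat (hζ.pow_of_coprime k hk) hn]
  rw [← eq_ratCast (algebraMap ℚ K)] at hp ⊢
  exact aeval_eq_algebraMap_of_aeval_minpoly_eq_zero (by rw [hminpoly, minpoly.aeval]) hp

theorem pow_zmod_val_mul {M : Type*} [Monoid M] {n : ℕ} [NeZero n] {ζ : M} (hζ : ζ ^ n = 1)
    (a b : ZMod n) : ζ ^ (a * b).val = (ζ ^ a.val) ^ b.val := by
  rw [ZMod.val_mul, ← pow_mul, ← pow_eq_pow_mod _ hζ]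

theorem dft_rational_constant_on_orbits_general (n : ℕ) (hn : 1 ≤ n) (R : Type*) [CommRing R]
    [Fintype R] [Algebra (ZMod n) R] (ψ : R →+ ZMod n)
    (ζ : ℂ) (hζ : IsPrimitiveRoot ζ n) (v : R → ℚ) :
    let A : Matrix R R ℂ := Matrix.of fun r t => ζ ^ (ψ (r * t)).val
    (∀ r : R, A.mulVec (fun t => (v t : ℂ)) r ∈ Set.range ((↑) : ℚ → ℂ)) →
      ∀ (u : (ZMod n)ˣ) (r₁ r₂ : R), r₂ = (u : ZMod n) • r₁ →
        A.mulVec (fun t => (v t : ℂ)) r₁ = A.mulVec (fun t => (v t : ℂ)) r₂ := by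
  intro A hrat u r₁ r₂ hr
  have : NeZero n := ⟨by omega⟩
  set P : ℚ[X] := ∑ t, C (v t) * X ^ (ψ (r₁ * t)).val
  have hP (ω : ℂ) : aeval ω P = ∑ t, (v t : ℂ) * ω ^ (ψ (r₁ * t)).val := by simp [P]
  have h₁ : A.mulVec (fun t => (v t : ℂ)) r₁ = aeval ζ P := by
    simp [hP, A, Matrix.mulVec, dotProduct, mul_comm]
  have h₂ : A.mulVec (fun t => (v t : ℂ)) r₂ = aeval (ζ ^ (u : ZMod n).val) P := by
    simp [hP, A, Matrix.mulVec, dotProduct, hr, ZMod.map_smul ψ,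
      pow_zmod_val_mul hζ.pow_eq_one, mul_comm]
  obtain ⟨q, hq⟩ := hrat r₁
  rw [h₂, hζ.aeval_pow_eq_of_aeval_eq_ratCast hn (ZMod.val_coe_unit_coprime u)
    (h₁ ▸ hq.symm), hq]

/-- Let `R` be a finite commutative symmetric `ZMod n`-algebra with non-degenerate linear
functional `ψ`, and let `A_R` be the DFT matrix `A_R (r, t) = ζ ^ ψ (r * t)`. If `v : R → ℚ`
is such that every entry of `A_R v` is rational, then `A_R v` is constant on the orbits
of the `(ZMod n)ˣ`-action on `R`. -/
theorem dft_rational_constant_on_orbits (n : ℕ) (hn : 1 ≤ n) (R : Type*) [CommRing R]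
    [Fintype R] [Algebra (ZMod n) R] (ψ : R →+ ZMod n)
    (hψ : ∀ I : Ideal R, (∀ x ∈ I, ψ x = 0) → I = ⊥)
    (ζ : ℂ) (hζ : IsPrimitiveRoot ζ n) (v : R → ℚ) :
    let A : Matrix R R ℂ := Matrix.of fun r t => ζ ^ (ψ (r * t)).val
    (∀ r : R, A.mulVec (fun t => (v t : ℂ)) r ∈ Set.range ((↑) : ℚ → ℂ)) →
      ∀ (u : (ZMod n)ˣ) (r₁ r₂ : R), r₂ = (u : ZMod n) • r₁ →
        A.mulVec (fun t => (v t : ℂ)) r₁ = A.mulVec (fun t => (v t : ℂ)) r₂ :=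
  dft_rational_constant_on_orbits_general n hn R ψ ζ hζ v
end

section
/- Let n ≥ 1, let R be a finite commutative symmetric ℤ/n-algebra with non-degenerate linear functional ψ : R → ℤ/n, let ζ ∈ ℂ be a primitive n-th root of unity, and let A_R be the R×R matrix over ℂ with entries A_R(r,t) = ζ^{ψ(r·t)}. Then for a vector v : R → ℚ, every entry of A_R v lies in ℚ if and only if v is constant on the orbits of the (ℤ/n)ˣ-action on R, i.e., v(u•r) = v(r) for all u ∈ (ℤ/n)ˣ and r ∈ R. -/
/-!
Realise `ζ` as the image of the canonical root of unity of `K = ℚ(μₙ)` under an embedding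
`K → ℂ`, so that `A_R v` is the image of the vector `w = A v` computed over `K`. An entry of `w`
is rational iff it is fixed by `Gal(K/ℚ) ≅ (ℤ/n)ˣ`, and the automorphism `ζ ↦ ζ ^ u` turns `w`
into the transform of `t ↦ v (u⁻¹ t)`, since `ψ (r * (u t)) = u * ψ (r * t)`. Non-degeneracy of
`ψ` makes `t ↦ ζ ^ ψ (· * t)` an injective family of additive characters, which are linearly
independent, so the transform is injective and `w` is Galois-fixed iff `v` is `(ℤ/n)ˣ`-invariant.
-/

open Matrix

namespace AddChar

theorem linearIndependent_of_isDomain {A F : Type*} [AddMonoid A] [CommRing F] [IsDomain F] :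
    LinearIndependent F ((⇑) : AddChar A F → A → F) :=
  (linearIndependent_monoidHom (Multiplicative A) F).comp toMonoidHomEquiv
    toMonoidHomEquiv.injective

theorem isPrimitive_compAddMonoidHom {R A M : Type*} [CommRing R] [AddCommGroup A]
    [CommMonoid M] {ρ : AddChar A M} (hρ : ∀ a, ρ a = 1 → a = 0) {ψ : R →+ A}
    (hψ : ∀ I : Ideal R, (∀ x ∈ I, ψ x = 0) → I = ⊥) :
    (ρ.compAddMonoidHom ψ).IsPrimitive := by
  intro a ha h
  refine ha (Ideal.span_singleton_eq_bot.mp (hψ _ fun x hx => ?_))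
  obtain ⟨t, rfl⟩ := Ideal.mem_span_singleton'.mp hx
  simpa [mul_comm] using hρ _ (DFunLike.congr_fun h t)

theorem zmodChar_mul {M : Type*} [CommMonoid M] {n : ℕ} [NeZero n] {ζ : M} (hζ : ζ ^ n = 1)
    (a b : ZMod n) : zmodChar n hζ (a * b) = zmodChar n hζ b ^ a.val := by
  rw [zmodChar_apply hζ b, ← pow_mul, ← zmodChar_apply' hζ, Nat.cast_mul, ZMod.natCast_zmod_val,
    ZMod.natCast_zmod_val, mul_comm]

theorem map_zmodChar_compAddMonoidHom {M : Type*} [CommMonoid M] {n : ℕ} [NeZero n] {ζ : M}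
    (hζ : ζ ^ n = 1) {R : Type*} [CommRing R] [Algebra (ZMod n) R] (ψ : R →+ ZMod n)
    (f : M →* M) (u : ZMod n) (hf : f ζ = ζ ^ u.val) (x : R) :
    f ((zmodChar n hζ).compAddMonoidHom ψ x) =
      (zmodChar n hζ).compAddMonoidHom ψ (algebraMap (ZMod n) R u * x) := by
  rw [compAddMonoidHom_apply, compAddMonoidHom_apply, ← Algebra.smul_def, ZMod.map_smul,
    smul_eq_mul, zmodChar_mul, zmodChar_apply, map_pow, hf, ← pow_mul, ← pow_mul, mul_comm]

variable {R F : Type*} [CommRing R] [CommRing F]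

def dftMatrix (χ : AddChar R F) : Matrix R R F := Matrix.of fun r t => χ (r * t)

variable [Fintype R]

theorem mulVec_dftMatrix_injective [IsDomain F] {χ : AddChar R F} (hχ : χ.IsPrimitive) :
    Function.Injective χ.dftMatrix.mulVec := by
  rw [Matrix.mulVec_injective_iff]
  convert linearIndependent_of_isDomain.comp _ (to_mulShift_inj_of_isPrimitive hχ) using 1
  ext t r
  simp [dftMatrix, mul_comm]

theorem mulShift_dftMatrix_mulVec (χ : AddChar R F) (c : Rˣ) (v : R → F) :
    (χ.mulShift c).dftMatrix *ᵥ v = χ.dftMatrix *ᵥ fun t => v (↑c⁻¹ * t) := by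
  ext r
  refine Fintype.sum_equiv (Units.mulLeft c) _ _ fun t => ?_
  simp [dftMatrix, mul_left_comm]

theorem forall_dftMatrix_mulVec_mem_range_iff {k K : Type*} [Field k] [Field K] [Algebra k K]
    [IsGalois k K] [FiniteDimensional k K] {χ : AddChar R K} (hχ : χ.IsPrimitive)
    (e : Gal(K/k) → Rˣ) (he : ∀ σ x, σ (χ x) = χ (e σ * x)) (v : R → k) :
    (∀ r, (χ.dftMatrix *ᵥ (algebraMap k K ∘ v)) r ∈ Set.range (algebraMap k K)) ↔
      ∀ σ r, v (e σ * r) = v r := by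
  simp_rw [IsGalois.mem_range_algebraMap_iff_fixed]
  rw [forall_comm]
  refine forall_congr' fun σ => ?_
  have hσ : (fun r => σ ((χ.dftMatrix *ᵥ (algebraMap k K ∘ v)) r)) =
      (χ.mulShift (e σ)).dftMatrix *ᵥ (algebraMap k K ∘ v) := by
    ext r
    simp [Matrix.mulVec, dotProduct, dftMatrix, he]
  rw [← funext_iff, hσ, mulShift_dftMatrix_mulVec, (mulVec_dftMatrix_injective hχ).eq_iff,
    funext_iff]
  simp only [Function.comp_apply, (algebraMap k K).injective.eq_iff]
  exact ⟨fun h r => by simpa using (h (e σ * r)).symm,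
    fun h r => by simpa using (h (↑(e σ)⁻¹ * r)).symm⟩

end AddChar

theorem AlgHom.map_mem_range_algebraMap_iff {k K L : Type*} [CommSemiring k] [DivisionRing K]
    [Semiring L] [Nontrivial L] [Algebra k K] [Algebra k L] (f : K →ₐ[k] L) (y : K) :
    f y ∈ Set.range (algebraMap k L) ↔ y ∈ Set.range (algebraMap k K) := by
  simp only [Set.mem_range, ← f.commutes]
  exact exists_congr fun _ => f.toRingHom.injective.eq_iff

theorem IsCyclotomicExtension.exists_algHom_zeta_eq {n : ℕ} [NeZero n] {K L C : Type*} [Field K]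
    [CommRing L] [IsDomain L] [Algebra K L] [IsCyclotomicExtension {n} K L] [CommRing C]
    [IsDomain C] [Algebra K C] (hirr : Irreducible (Polynomial.cyclotomic n K)) {ζ : C}
    (hζ : IsPrimitiveRoot ζ n) : ∃ φ : L →ₐ[K] C, φ (zeta n K L) = ζ :=
  ⟨((zeta_spec n K L).embeddingsEquivPrimitiveRoots C hirr).symm
      ⟨ζ, (mem_primitiveRoots (NeZero.pos n)).2 hζ⟩, by
    rw [← (zeta_spec n K L).embeddingsEquivPrimitiveRoots_apply_coe C hirr,
      Equiv.apply_symm_apply]⟩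

open AddChar IsCyclotomicExtension in
/-- Let `R` be a finite commutative symmetric `ZMod n`-algebra with non-degenerate linear
functional `ψ`, and let `A_R` be the DFT matrix `A_R (r, t) = ζ ^ ψ (r * t)`. A rational
vector `v : R → ℚ` has `A_R v` with all entries rational iff `v` is constant on the orbits
of the `(ZMod n)ˣ`-action on `R`. -/
theorem dft_rational_iff_constant_on_orbits (n : ℕ) (hn : 1 ≤ n) (R : Type*) [CommRing R]
    [Fintype R] [Algebra (ZMod n) R] (ψ : R →+ ZMod n)
    (hψ : ∀ I : Ideal R, (∀ x ∈ I, ψ x = 0) → I = ⊥)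
    (ζ : ℂ) (hζ : IsPrimitiveRoot ζ n) (v : R → ℚ) :
    let A : Matrix R R ℂ := Matrix.of fun r t => ζ ^ (ψ (r * t)).val
    (∀ r : R, A.mulVec (fun t => (v t : ℂ)) r ∈ Set.range ((↑) : ℚ → ℂ)) ↔
      ∀ (u : (ZMod n)ˣ) (r : R), v ((u : ZMod n) • r) = v r := by
  intro A
  have : NeZero n := ⟨by omega⟩
  let K := CyclotomicField n ℚ
  have : IsCyclotomicExtension {n} ℚ K := CyclotomicField.isCyclotomicExtension n ℚ
  have : IsGalois ℚ K := isGalois {n} ℚ K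
  have : FiniteDimensional ℚ K := finiteDimensional {n} ℚ K
  have hζK := zeta_spec n ℚ K
  have hirr := Polynomial.cyclotomic.irreducible_rat (n := n) (by omega)
  obtain ⟨φ, hφ⟩ := exists_algHom_zeta_eq (L := K) hirr hζ
  let χ := (zmodChar n hζK.pow_eq_one).compAddMonoidHom ψ
  have hχ : χ.IsPrimitive := isPrimitive_compAddMonoidHom
    (fun a => ((zmodChar_primitive_of_primitive_root n hζK).zmod_char_eq_one_iff n a).mp) hψ
  have hA : ∀ r, (A *ᵥ fun t => (v t : ℂ)) r = φ ((χ.dftMatrix *ᵥ (algebraMap ℚ K ∘ v)) r) := by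
    intro r
    rw [← φ.coe_toRingHom, RingHom.map_mulVec]
    congr
    · ext r t; simp [A, χ, dftMatrix, zmodChar_apply, hφ]
    · ext t; simp
  let e : Gal(K/ℚ) → Rˣ := fun σ => Units.map (algebraMap (ZMod n) R) (autEquivPow K hirr σ)
  have he : ∀ σ x, σ (χ x) = χ (e σ * x) := fun σ x =>
    map_zmodChar_compAddMonoidHom _ ψ σ.toRingHom.toMonoidHom _ (hζK.autToPow_spec ℚ σ).symm x
  change (∀ r, _ ∈ Set.range (algebraMap ℚ ℂ)) ↔ _
  simp_rw [hA, φ.map_mem_range_algebraMap_iff, forall_dftMatrix_mulVec_mem_range_iff hχ e he,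
    (autEquivPow K hirr).surjective.forall]
  simp only [e, Units.coe_map, MonoidHom.coe_coe, Algebra.smul_def, autEquivPow_apply]
end

section
/- Let n ≥ 1, let R be a finite commutative symmetric ℤ/n-algebra with non-degenerate linear functional ψ : R → ℤ/n, let ζ ∈ ℂ be a primitive n-th root of unity, and let S ⊆ R \ {0} be a subset with S = -S. Then the characteristic polynomial of the adjacency matrix of the Cayley graph Γ(R,S) equals ∏_{r ∈ R} (X − ∑_{s ∈ S} ζ^{ψ(r·s)}); in particular, the eigenvalues of Γ(R,S), counted with multiplicity, are the numbers λ_r = ∑_{s ∈ S} ζ^{ψ(r·s)} for r ∈ R. -/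
open Matrix Polynomial

/-- Conjugation invariance of the characteristic polynomial. -/
theorem charpoly_conj_aux {m K : Type*} [Fintype m] [DecidableEq m] [Field K]
    (P M : Matrix m m K) (h : IsUnit P.det) :
    (P * M * P⁻¹).charpoly = M.charpoly := by
  have hP : P * P⁻¹ = 1 := mul_nonsing_inv P h
  have hmap : (P.map C) * (P⁻¹.map C) = 1 := by
    have := congrArg (fun N : Matrix m m K => N.map (C : K →+* K[X])) hP
    simpa [Matrix.map_mul] using this
  have hcm : charmatrix (P * M * P⁻¹) = (P.map C) * charmatrix M * (P⁻¹.map C) := by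
    unfold charmatrix
    simp only [RingHom.mapMatrix_apply, Matrix.map_mul]
    rw [mul_sub, sub_mul, mul_assoc]
    congr 1
    have : Matrix.scalar m (X : K[X]) = (X : K[X]) • (1 : Matrix m m K[X]) := by
      simp [Matrix.smul_one_eq_diagonal]
    rw [this]
    simp only [Matrix.mul_smul, Matrix.smul_mul, mul_one, one_mul, hmap]
  have : ((P⁻¹.map (C : K →+* K[X])).det) * ((P.map (C : K →+* K[X])).det) = 1 := by
    rw [← det_mul, ← Matrix.map_mul, nonsing_inv_mul P h]
    simp
  rw [Matrix.charpoly, hcm, det_mul, det_mul, Matrix.charpoly]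
  rw [mul_comm, ← mul_assoc, this, one_mul]

/-- Let `R` be a finite commutative symmetric `ZMod n`-algebra with non-degenerate
linear functional `ψ`, `ζ` a primitive `n`-th root of unity, and `S ⊆ R \ {0}` with
`S = -S`. The characteristic polynomial of the adjacency matrix of `Γ(R,S)` is
`∏_{r ∈ R} (X - ∑_{s ∈ S} ζ ^ ψ (r * s))`. -/
theorem cayley_charpoly (n : ℕ) (hn : 1 ≤ n) (R : Type*) [CommRing R] [Fintype R]
    [Algebra (ZMod n) R] (ψ : R →+ ZMod n)
    (hψ : ∀ I : Ideal R, (∀ x ∈ I, ψ x = 0) → I = ⊥)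
    (ζ : ℂ) (hζ : IsPrimitiveRoot ζ n)
    (S : Set R) (hS0 : S ⊆ {x : R | x ≠ 0}) (hSneg : S = -S) :
    letI := Classical.decEq R
    (cayleyAdj S).charpoly =
      ∏ r : R, (Polynomial.X - Polynomial.C (∑ᶠ s ∈ S, ζ ^ (ψ (r * s)).val)) := by
  classical
  haveI : NeZero n := ⟨by omega⟩
  set e : AddChar (ZMod n) ℂ := AddChar.zmodChar n hζ.pow_eq_one with he
  have he1 : ∀ a : ZMod n, e a = 1 → a = 0 := by
    intro a ha
    have h1 : ζ ^ a.val = 1 := ha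
    have hdvd := (hζ.pow_eq_one_iff_dvd _).mp h1
    have hlt := ZMod.val_lt a
    have : a.val = 0 := Nat.eq_zero_of_dvd_of_lt hdvd hlt
    exact (ZMod.val_eq_zero a).mp this
  -- character sum
  have hsum : ∀ t : R, t ≠ 0 → ∑ x : R, e (ψ (t * x)) = 0 := by
    intro t ht
    have hne : (AddChar.compAddMonoidHom e (ψ.comp (AddMonoidHom.mulLeft t))) ≠ 0 := by
      intro hzero
      apply ht
      have key : ∀ x : R, ψ (t * x) = 0 := by
        intro x
        have h1 : e (ψ (t * x)) = 1 := by
          have := congrFun (congrArg DFunLike.coe hzero) x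
          simpa using this
        exact he1 _ h1
      have hbot : Ideal.span {t} = ⊥ := by
        apply hψ
        intro x hx
        rw [Ideal.mem_span_singleton'] at hx
        obtain ⟨a, rfl⟩ := hx
        rw [mul_comm]
        exact key a
      simpa [Ideal.span_singleton_eq_bot] using hbot
    have := AddChar.sum_eq_zero_iff_ne_zero.mpr hne
    simpa using this
  have hsum' : ∀ t : R, ∑ x : R, e (ψ (t * x)) =
      if t = 0 then (Fintype.card R : ℂ) else 0 := by
    intro t
    split_ifs with h
    · subst h; simp [Finset.card_univ]
    · exact hsum t h
  have hSfin : S.Finite := Set.toFinite S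
  set T : Finset R := hSfin.toFinset with hT
  set c : R → ℂ := fun r => ∑ s ∈ T, e (ψ (r * s)) with hc
  set U : Matrix R R ℂ := Matrix.of fun r x => e (ψ (r * x)) with hU
  set V : Matrix R R ℂ := Matrix.of fun x r => e (- ψ (r * x)) with hV
  have hUV : U * V = (Fintype.card R : ℂ) • (1 : Matrix R R ℂ) := by
    ext r r'
    simp only [Matrix.mul_apply, hU, hV, Matrix.of_apply, Matrix.smul_apply, Matrix.one_apply,
      smul_eq_mul]
    have hterm : ∀ x : R, e (ψ (r * x)) * e (- ψ (r' * x)) = e (ψ ((r - r') * x)) := by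
      intro x
      rw [← AddChar.map_add_eq_mul]
      congr 1
      rw [sub_mul, map_sub]
      ring
    rw [Finset.sum_congr rfl fun x _ => hterm x, hsum' (r - r')]
    by_cases h : r = r' <;> simp [h, sub_eq_zero]
  have hAU : cayleyAdj S * Uᵀ = Uᵀ * Matrix.diagonal c := by
    ext a r
    rw [Matrix.mul_apply, Matrix.mul_diagonal]
    have step1 : ∑ b : R, cayleyAdj S a b * Uᵀ b r
        = ∑ x : R, S.indicator (fun _ => (1:ℂ)) x * e (ψ (r * (a + x))) := by
      refine (Fintype.sum_equiv (Equiv.addLeft a)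
        (fun x => S.indicator (fun _ => (1:ℂ)) x * e (ψ (r * (a + x))))
        (fun b => cayleyAdj S a b * Uᵀ b r) ?_).symm
      intro x
      simp [cayleyAdj, hU, Matrix.transpose_apply, Equiv.addLeft]
    rw [step1]
    have step2 : ∀ x : R, S.indicator (fun _ => (1:ℂ)) x * e (ψ (r * (a + x)))
        = e (ψ (r * a)) * (if x ∈ T then e (ψ (r * x)) else 0) := by
      intro x
      rw [mul_add, map_add, AddChar.map_add_eq_mul, Set.indicator_apply]
      by_cases h : x ∈ S
      · rw [if_pos h, if_pos (hSfin.mem_toFinset.mpr h), one_mul]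
      · rw [if_neg h, if_neg (fun hx => h (hSfin.mem_toFinset.mp hx)), zero_mul, mul_zero]
    rw [Finset.sum_congr rfl fun x _ => step2 x, ← Finset.mul_sum]
    rw [Finset.sum_ite_mem, Finset.univ_inter]
    simp [hU, Matrix.transpose_apply, hc, mul_comm]
  have hcard : (Fintype.card R : ℂ) ≠ 0 := by
    exact_mod_cast Fintype.card_ne_zero
  have hUdet : IsUnit U.det := by
    have hdet : U.det * V.det = (Fintype.card R : ℂ) ^ (Fintype.card R) := by
      rw [← det_mul, hUV, det_smul, det_one, mul_one]
    rw [isUnit_iff_ne_zero]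
    intro h0
    rw [h0, zero_mul] at hdet
    exact pow_ne_zero _ hcard hdet.symm
  have hTdet : IsUnit (Uᵀ).det := by rwa [det_transpose]
  have hA : cayleyAdj S = Uᵀ * Matrix.diagonal c * (Uᵀ)⁻¹ := by
    have hinv : Uᵀ * (Uᵀ)⁻¹ = 1 := mul_nonsing_inv _ hTdet
    calc cayleyAdj S = cayleyAdj S * (Uᵀ * (Uᵀ)⁻¹) := by rw [hinv, mul_one]
      _ = (cayleyAdj S * Uᵀ) * (Uᵀ)⁻¹ := by rw [mul_assoc]
      _ = Uᵀ * Matrix.diagonal c * (Uᵀ)⁻¹ := by rw [hAU]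
  have hdiagcp : (Matrix.diagonal c).charpoly = ∏ r : R, (X - C (c r)) := by
    rw [Matrix.charpoly]
    have hcm : charmatrix (Matrix.diagonal c)
        = Matrix.diagonal (fun r => (X : ℂ[X]) - C (c r)) := by
      ext i j
      by_cases h : i = j
      · subst h; simp
      · rw [charmatrix_apply_ne _ _ _ h, Matrix.diagonal_apply_ne _ h,
          Matrix.diagonal_apply_ne _ h]
        simp
    rw [hcm, det_diagonal]
  have hfin : ∀ r : R, (∑ᶠ s ∈ S, ζ ^ (ψ (r * s)).val) = c r := by
    intro r
    rw [← hSfin.coe_toFinset, finsum_mem_coe_finset]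
    rfl
  have goal : (cayleyAdj S).charpoly
      = ∏ r : R, (X - C (∑ᶠ s ∈ S, ζ ^ (ψ (r * s)).val)) := by
    rw [hA, charpoly_conj_aux _ _ hTdet, hdiagcp]
    exact Finset.prod_congr rfl fun r _ => by rw [hfin r]
  convert goal using 2
end

section
/- Let n ≥ 1 and let S ⊆ (ℤ/n) \ {0} be a subset with S = -S. Then the Cayley graph Γ(ℤ/n, S) is integral (all eigenvalues of its adjacency matrix are integers) if and only if S is a union of some of the sets G_n(d) = { m ∈ ℤ/n : gcd(m, n) = d }, where d ranges over positive divisors of n (equivalently, if and only if whenever m ∈ S and m' ∈ ℤ/n satisfy gcd(m, n) = gcd(m', n), then m' ∈ S). -/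
open Matrix

namespace ZMod

section gcd

variable {n : ℕ}

lemma gcd_val_unit_mul (u : (ZMod n)ˣ) (a : ZMod n) : (u * a).val.gcd n = a.val.gcd n := by
  rw [val_mul, ← Nat.gcd_rec, Nat.gcd_comm]
  exact Nat.Coprime.gcd_mul_left_cancel _ (val_coe_unit_coprime u)

lemma gcd_val_natCast_of_dvd {d : ℕ} (hd : d ∣ n) : (d : ZMod n).val.gcd n = d := by
  rw [val_natCast, ← Nat.gcd_rec, Nat.gcd_comm, Nat.gcd_eq_left hd]

lemma exists_unit_mul_eq_of_gcd_val_eq {a b : ZMod n} (h : a.val.gcd n = b.val.gcd n) :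
    ∃ u : (ZMod n)ˣ, u * a = b := by
  obtain ⟨d, hd, _, ⟨u, rfl⟩, rfl⟩ := eq_unit_mul_divisor a
  obtain ⟨e, he, _, ⟨v, rfl⟩, rfl⟩ := eq_unit_mul_divisor b
  rw [gcd_val_unit_mul, gcd_val_unit_mul, gcd_val_natCast_of_dvd hd,
    gcd_val_natCast_of_dvd he] at h
  subst h
  exact ⟨v * u⁻¹, by rw [Units.val_mul, mul_assoc, Units.inv_mul_cancel_left]⟩

lemma forall_unit_mul_eq_iff {α : Type*} (f : ZMod n → α) :
    (∀ (u : (ZMod n)ˣ) j, f (u * j) = f j) ↔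
      ∀ a b : ZMod n, a.val.gcd n = b.val.gcd n → f a = f b := by
  refine ⟨fun h a b hab => ?_, fun h u j => h _ _ (gcd_val_unit_mul u j)⟩
  obtain ⟨u, rfl⟩ := exists_unit_mul_eq_of_gcd_val_eq hab
  exact (h u a).symm

end gcd

variable {n : ℕ} [NeZero n]

lemma forall_dft_unit_mul_eq_iff {E : Type*} [AddCommGroup E] [Module ℂ E] (Φ : ZMod n → E) :
    (∀ (u : (ZMod n)ˣ) k, 𝓕 Φ (u * k) = 𝓕 Φ k) ↔ ∀ (u : (ZMod n)ˣ) j, Φ (u * j) = Φ j := by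
  have key (u : (ZMod n)ˣ) :
      (fun j => Φ (u * j)) = Φ ↔ (fun k => 𝓕 Φ (↑u⁻¹ * k)) = 𝓕 Φ := by
    rw [← dft.injective.eq_iff]
    exact iff_of_eq (congrArg (· = 𝓕 Φ) (funext (dft_comp_unitMul Φ u)))
  refine ⟨fun h u => funext_iff.mp ((key u).mpr (funext fun k => h u⁻¹ k)), fun h u k => ?_⟩
  simpa using congrFun ((key u⁻¹).mp (funext (h u⁻¹))) k

noncomputable def fourierMatrix (n : ℕ) [NeZero n] : Matrix (ZMod n) (ZMod n) ℂ :=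
  Matrix.of fun k j => stdAddChar (j * k)

lemma fourierMatrix_mulVec (w : ZMod n → ℂ) : fourierMatrix n *ᵥ w = fun k => 𝓕 w (-k) := by
  ext k
  simp [fourierMatrix, mulVec, dotProduct, dft_apply]

section spectrum

variable [DecidableEq (ZMod n)]

lemma isUnit_fourierMatrix : IsUnit (fourierMatrix n) := by
  refine mulVec_injective_iff_isUnit.mp fun v w h => dft.injective (funext fun k => ?_)
  simpa [fourierMatrix_mulVec] using congrFun h (-k)

lemma fourierMatrix_mul_transpose_circulant (v : ZMod n → ℂ) :
    fourierMatrix n * (circulant v)ᵀ = diagonal (𝓕 v) * fourierMatrix n := by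
  ext k b
  rw [diagonal_mul, mul_apply, dft_apply, Finset.sum_mul]
  refine Fintype.sum_equiv (Equiv.subLeft b) _ _ fun t => ?_
  simp only [fourierMatrix, transpose_apply, circulant_apply, of_apply, Equiv.subLeft_apply,
    smul_eq_mul]
  rw [mul_right_comm, ← AddChar.map_add_eq_mul]
  ring_nf

lemma spectrum_transpose_circulant (v : ZMod n → ℂ) :
    spectrum ℂ (circulant v)ᵀ = Set.range (𝓕 v) := by
  rw [← spectrum_diagonal, ← spectrum.units_conjugate (u := isUnit_fourierMatrix.unit),
    IsUnit.unit_spec, fourierMatrix_mul_transpose_circulant, mul_assoc,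
    IsUnit.mul_val_inv, mul_one]

end spectrum

end ZMod

lemma exists_intCast_eq_of_isIntegral_of_forall_algEquiv_apply_eq {K : Type*} [Field K]
    [Algebra ℚ K] [FiniteDimensional ℚ K] [IsGalois ℚ K] {x : K} (hint : IsIntegral ℤ x)
    (hfix : ∀ σ : K ≃ₐ[ℚ] K, σ x = x) : ∃ z : ℤ, (z : K) = x := by
  have hbot : x ∈ (⊥ : IntermediateField ℚ K) := by
    rw [← IsGalois.fixedField_fixingSubgroup ⊥]
    exact fun σ => hfix σ
  obtain ⟨q, rfl⟩ := IntermediateField.mem_bot.mp hbot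
  obtain ⟨z, rfl⟩ := IsIntegrallyClosed.isIntegral_iff.mp
    ((isIntegral_algebraMap_iff (algebraMap ℚ K).injective).mp hint)
  exact ⟨z, by simp⟩

open ZMod

namespace IsCyclotomicExtension

variable (n : ℕ) [NeZero n] (K : Type*) [Field K] [Algebra ℚ K] [IsCyclotomicExtension {n} ℚ K]

noncomputable def zetaChar : AddChar (ZMod n) K :=
  AddChar.zmodChar n (zeta_pow n ℚ K)

variable {n K}

lemma algEquiv_zetaChar (σ : K ≃ₐ[ℚ] K) (t : ZMod n) :
    σ (zetaChar n K t) = zetaChar n K ((zeta_spec n ℚ K).autToPow ℚ σ * t) := by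
  set u : ZMod n := ((zeta_spec n ℚ K).autToPow ℚ σ : ZMod n)
  have hut : ((u.val * t.val : ℕ) : ZMod n) = u * t := by simp
  rw [zetaChar, AddChar.zmodChar_apply, map_pow, ← (zeta_spec n ℚ K).autToPow_spec ℚ σ,
    ← pow_mul, ← hut, AddChar.zmodChar_apply']

lemma exists_algHom_comp_zetaChar :
    ∃ φ : K →ₐ[ℚ] ℂ, ∀ t, φ (zetaChar n K t) = stdAddChar t := by
  have hirr := Polynomial.cyclotomic.irreducible_rat (NeZero.pos n)
  have hω : IsPrimitiveRoot (stdAddChar (1 : ZMod n)) n := by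
    have h := stdAddChar_coe (N := n) 1
    push_cast at h
    rw [h, mul_one]
    exact Complex.isPrimitiveRoot_exp n (NeZero.ne n)
  let φ := ((zeta_spec n ℚ K).embeddingsEquivPrimitiveRoots ℂ hirr).symm
    ⟨_, (mem_primitiveRoots (NeZero.pos n)).mpr hω⟩
  have hφ : φ (zeta n ℚ K) = stdAddChar (1 : ZMod n) := by
    rw [← (zeta_spec n ℚ K).embeddingsEquivPrimitiveRoots_apply_coe ℂ hirr φ,
      Equiv.apply_symm_apply]
  refine ⟨φ, fun t => ?_⟩
  rw [zetaChar, AddChar.zmodChar_apply, map_pow, hφ, ← AddChar.map_nsmul_eq_pow, nsmul_one,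
    natCast_zmod_val]

variable (K) in
noncomputable def cyclotomicDFT (f : ZMod n → ℤ) (k : ZMod n) : K :=
  ∑ j, (f j : K) * zetaChar n K (-(j * k))

lemma algEquiv_cyclotomicDFT (σ : K ≃ₐ[ℚ] K) (f : ZMod n → ℤ) (k : ZMod n) :
    σ (cyclotomicDFT K f k) = cyclotomicDFT K f ((zeta_spec n ℚ K).autToPow ℚ σ * k) := by
  simp only [cyclotomicDFT, map_sum, map_mul, map_intCast, algEquiv_zetaChar]
  congr! 3
  ring

lemma isIntegral_cyclotomicDFT (f : ZMod n → ℤ) (k : ZMod n) :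
    IsIntegral ℤ (cyclotomicDFT K f k) := by
  refine IsIntegral.sum _ fun j _ => (isIntegral_algebraMap (x := f j)).mul ?_
  exact ((zeta_spec n ℚ K).isIntegral (NeZero.pos n)).pow _

lemma algHom_cyclotomicDFT {φ : K →ₐ[ℚ] ℂ} (hφ : ∀ t, φ (zetaChar n K t) = stdAddChar t)
    (f : ZMod n → ℤ) (k : ZMod n) :
    φ (cyclotomicDFT K f k) = 𝓕 (fun j => (f j : ℂ)) k := by
  simp only [cyclotomicDFT, map_sum, map_mul, map_intCast, hφ, dft_apply, smul_eq_mul, mul_comm]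

end IsCyclotomicExtension

open IsCyclotomicExtension in
lemma ZMod.range_dft_intCast_subset_iff {n : ℕ} [NeZero n] (f : ZMod n → ℤ) :
    Set.range (𝓕 fun j => (f j : ℂ)) ⊆ Set.range ((↑) : ℤ → ℂ) ↔
      ∀ (u : (ZMod n)ˣ) j, f (u * j) = f j := by
  let K := CyclotomicField n ℚ
  -- instance search does not find this for `ℚ`
  have : IsCyclotomicExtension {n} ℚ K := CyclotomicField.isCyclotomicExtension n ℚ
  have := isGalois {n} ℚ K
  have := finiteDimensional {n} ℚ K
  have hirr := Polynomial.cyclotomic.irreducible_rat (NeZero.pos n)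
  obtain ⟨φ, hφ⟩ := exists_algHom_comp_zetaChar (n := n) (K := K)
  have hφinj : Function.Injective φ := φ.injective
  have hinvariant : (∀ (u : (ZMod n)ˣ) j, f (u * j) = f j) ↔
      ∀ (u : (ZMod n)ˣ) k, cyclotomicDFT K f (u * k) = cyclotomicDFT K f k := by
    simp only [← hφinj.eq_iff, algHom_cyclotomicDFT hφ, forall_dft_unit_mul_eq_iff,
      Int.cast_inj]
  rw [hinvariant, Set.range_subset_iff]
  simp only [← algHom_cyclotomicDFT hφ, Set.mem_range]
  constructor
  · intro hint u k
    obtain ⟨z, hz⟩ := hint k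
    have hcz : cyclotomicDFT K f k = z := hφinj (by rw [map_intCast, hz])
    let σ := (autEquivPow K hirr).symm u
    have hσ : (zeta_spec n ℚ K).autToPow ℚ σ = u := (autEquivPow K hirr).apply_symm_apply u
    rw [← hσ, ← algEquiv_cyclotomicDFT, hcz, map_intCast]
  · intro hinv k
    obtain ⟨z, hz⟩ := exists_intCast_eq_of_isIntegral_of_forall_algEquiv_apply_eq
      (isIntegral_cyclotomicDFT (K := K) f k) fun σ => by rw [algEquiv_cyclotomicDFT, hinv]
    exact ⟨z, by rw [← hz, map_intCast]⟩

theorem so_theorem_general (n : ℕ) (hn : 1 ≤ n) (S : Set (ZMod n)) :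
    haveI : NeZero n := ⟨Nat.one_le_iff_ne_zero.mp hn⟩
    IsIntegralCayley S ↔
      ∀ m ∈ S, ∀ m' : ZMod n, Nat.gcd (ZMod.val m) n = Nat.gcd (ZMod.val m') n → m' ∈ S := by
  have : NeZero n := ⟨Nat.one_le_iff_ne_zero.mp hn⟩
  -- the instance through which `IsIntegralCayley` forms the matrix algebra
  let := Classical.decEq (ZMod n)
  have hcayley : cayleyAdj S = (circulant fun j => ((S.indicator 1 j : ℤ) : ℂ))ᵀ := by
    ext a b
    by_cases h : b - a ∈ S <;> simp [cayleyAdj, h]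
  rw [IsIntegralCayley, hcayley, spectrum_transpose_circulant, range_dft_intCast_subset_iff,
    forall_unit_mul_eq_iff]
  refine ⟨fun h m hm m' hmm' => ?_, fun h a b hab => ?_⟩
  · by_contra hm'
    simpa [hm, hm'] using h m m' hmm'
  · have hab' : a ∈ S ↔ b ∈ S := ⟨fun ha => h a ha b hab, fun hb => h b hb a hab.symm⟩
    exact Set.indicator_eq_indicator hab' rfl

/-- So's theorem: for `S ⊆ (ZMod n) \ {0}` with `S = -S`, the Cayley graph `Γ(ZMod n, S)`
is integral iff `S` is a union of the sets `G_n(d) = {m : gcd(m, n) = d}`, i.e. iff whenever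
`m ∈ S` and `m' : ZMod n` satisfy `gcd(m, n) = gcd(m', n)` then `m' ∈ S`. -/
theorem so_theorem (n : ℕ) (hn : 1 ≤ n) (S : Set (ZMod n))
    (hS0 : S ⊆ {x : ZMod n | x ≠ 0}) (hSneg : S = -S) :
    haveI : NeZero n := ⟨Nat.one_le_iff_ne_zero.mp hn⟩
    IsIntegralCayley S ↔
      ∀ m ∈ S, ∀ m' : ZMod n, Nat.gcd (ZMod.val m) n = Nat.gcd (ZMod.val m') n → m' ∈ S :=
  so_theorem_general n hn S
end

section
/- Let n₁, n₂ ≥ 1 with gcd(n₁, n₂) = 1, let R₁ be a finite commutative symmetric ℤ/n₁-algebra and let R₂ be a finite commutative symmetric ℤ/n₂-algebra. Then the product ring R₁ × R₂ is a symmetric ℤ/(n₁n₂)-algebra. -/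
namespace AddMonoidHom

variable {R S M N : Type*} [Semiring R] [Semiring S] [AddZeroClass M] [AddZeroClass N]

def IsNondegenerate (ψ : R →+ M) : Prop :=
  ∀ I : Ideal R, (∀ x ∈ I, ψ x = 0) → I = ⊥

theorem IsNondegenerate.comp_injective {ψ : R →+ M} (hψ : ψ.IsNondegenerate) {f : M →+ N}
    (hf : Function.Injective f) : (f.comp ψ).IsNondegenerate := fun I hI =>
  hψ I fun x hx => hf <| by rw [map_zero]; exact hI x hx

theorem IsNondegenerate.prodMap {ψ : R →+ M} {φ : S →+ N} (hψ : ψ.IsNondegenerate)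
    (hφ : φ.IsNondegenerate) : (ψ.prodMap φ).IsNondegenerate := by
  intro I hI
  -- The factors of `I` are killed since `(y.1, 0) = (1, 0) * y` and `(0, y.2) = (0, 1) * y`.
  have hfst : I.map (RingHom.fst R S) = ⊥ := by
    refine hψ _ fun x hx => ?_
    obtain ⟨y, hy, rfl⟩ := (Ideal.mem_map_iff_of_surjective _ Prod.fst_surjective).mp hx
    simpa using congrArg Prod.fst (hI _ (I.mul_mem_left (1, 0) hy))
  have hsnd : I.map (RingHom.snd R S) = ⊥ := by
    refine hφ _ fun x hx => ?_
    obtain ⟨y, hy, rfl⟩ := (Ideal.mem_map_iff_of_surjective _ Prod.snd_surjective).mp hx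
    simpa using congrArg Prod.snd (hI _ (I.mul_mem_left (0, 1) hy))
  rw [Ideal.ideal_prod_eq I, hfst, hsnd, Ideal.prod_bot_bot]

end AddMonoidHom

theorem prod_symmetric_coprime_general (n₁ n₂ : ℕ)
    (hcop : Nat.Coprime n₁ n₂) (R₁ R₂ : Type*) [CommRing R₁] [CommRing R₂]
    [Algebra (ZMod n₁) R₁] [Algebra (ZMod n₂) R₂]
    (h₁ : IsSymmetricZModAlgebra n₁ R₁) (h₂ : IsSymmetricZModAlgebra n₂ R₂) :
    letI : Algebra (ZMod (n₁ * n₂)) (R₁ × R₂) :=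
      RingHom.toAlgebra
        (((algebraMap (ZMod n₁) R₁).comp (ZMod.castHom (dvd_mul_right n₁ n₂) (ZMod n₁))).prod
          ((algebraMap (ZMod n₂) R₂).comp (ZMod.castHom (dvd_mul_left n₂ n₁) (ZMod n₂))))
    IsSymmetricZModAlgebra (n₁ * n₂) (R₁ × R₂) := by
  obtain ⟨ψ₁, hψ₁⟩ := h₁
  obtain ⟨ψ₂, hψ₂⟩ := h₂
  let crt : ZMod n₁ × ZMod n₂ ≃+ ZMod (n₁ * n₂) := (ZMod.chineseRemainder hcop).symm.toAddEquiv
  have hψ : (ψ₁.prodMap ψ₂).IsNondegenerate := .prodMap hψ₁ hψ₂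
  exact ⟨crt.toAddMonoidHom.comp (ψ₁.prodMap ψ₂), hψ.comp_injective crt.injective⟩

/-- If `gcd(n₁, n₂) = 1`, `R₁` is a finite commutative symmetric `ZMod n₁`-algebra and `R₂`
is a finite commutative symmetric `ZMod n₂`-algebra, then `R₁ × R₂` is a symmetric
`ZMod (n₁ * n₂)`-algebra (with the `ZMod (n₁ * n₂)`-algebra structure coming from the
Chinese remainder theorem). -/
theorem prod_symmetric_coprime (n₁ n₂ : ℕ) (hn₁ : 1 ≤ n₁) (hn₂ : 1 ≤ n₂)
    (hcop : Nat.Coprime n₁ n₂) (R₁ R₂ : Type*) [CommRing R₁] [CommRing R₂]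
    [Fintype R₁] [Fintype R₂] [Algebra (ZMod n₁) R₁] [Algebra (ZMod n₂) R₂]
    (h₁ : IsSymmetricZModAlgebra n₁ R₁) (h₂ : IsSymmetricZModAlgebra n₂ R₂) :
    letI : Algebra (ZMod (n₁ * n₂)) (R₁ × R₂) :=
      RingHom.toAlgebra
        (((algebraMap (ZMod n₁) R₁).comp (ZMod.castHom (dvd_mul_right n₁ n₂) (ZMod n₁))).prod
          ((algebraMap (ZMod n₂) R₂).comp (ZMod.castHom (dvd_mul_left n₂ n₁) (ZMod n₂))))
    IsSymmetricZModAlgebra (n₁ * n₂) (R₁ × R₂) :=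
  prod_symmetric_coprime_general n₁ n₂ hcop R₁ R₂ h₁ h₂
end

section
/- Let p be a prime, q a power of p, and let I be a nonzero ideal of the formal power series ring 𝔽_q⟦X⟧. Then the quotient 𝔽_q⟦X⟧/I is a finite symmetric 𝔽_p-algebra. -/
/-!
Since `𝔽_q⟦X⟧` is a discrete valuation ring with finite residue field `𝔽_q`, every nonzero
ideal is `(X^(n+1))` or the whole ring, and the quotient is finite. On `𝔽_q⟦X⟧/(X^(n+1))`
take `ψ = λ ∘ coeff n` for an `𝔽_p`-linear `λ : 𝔽_q → 𝔽_p` with `λ 1 = 1`: if `f` has a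
nonzero coefficient in degree `k ≤ n`, then `c X^(n-k) f` has `n`-th coefficient `1` for a
suitable `c ∈ 𝔽_q`, so no nonzero ideal lies in `ker ψ`.
-/

open PowerSeries IsLocalRing

theorem IsDiscreteValuationRing.finite_quotient {R : Type*} [CommRing R] [IsDomain R]
    [IsDiscreteValuationRing R] [Finite (ResidueField R)] {I : Ideal R} (hI : I ≠ ⊥) :
    Finite (R ⧸ I) := by
  obtain ⟨n, rfl⟩ :=
    exists_maximalIdeal_pow_eq_of_principal R (IsPrincipalIdealRing.principal _) I hI
  exact finite_quotient_iff.mpr ⟨n, le_rfl⟩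

theorem Ideal.eq_bot_of_forall_exists_mul_ne_zero {S A : Type*} [CommSemiring S] [AddMonoid A]
    (ψ : S →+ A) (h : ∀ x ≠ 0, ∃ y, ψ (y * x) ≠ 0) {J : Ideal S} (hJ : ∀ x ∈ J, ψ x = 0) :
    J = ⊥ := by
  refine (Submodule.eq_bot_iff J).mpr fun x hx => ?_
  by_contra hx0
  obtain ⟨y, hy⟩ := h x hx0
  exact hy (hJ _ (J.mul_mem_left y hx))

theorem exists_addMonoidHom_zmod_apply_one (p : ℕ) [Fact p.Prime] (K : Type*) [Ring K]
    [Nontrivial K] [CharP K p] : ∃ l : K →+ ZMod p, l 1 = 1 := by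
  let := ZMod.algebra K p
  obtain ⟨l, hl⟩ := Module.Projective.exists_dual_eq_one (ZMod p) (one_ne_zero : (1 : K) ≠ 0)
  exact ⟨l.toAddMonoidHom, hl⟩

namespace PowerSeries

instance finite_residueField {K : Type*} [Field K] [Finite K] : Finite (ResidueField K⟦X⟧) :=
  .of_equiv _ residueFieldOfPowerSeries.symm.toEquiv

theorem exists_coeff_mul_eq {K : Type*} [Field K] {f : K⟦X⟧} {k n : ℕ} (hf : coeff k f ≠ 0)
    (hkn : k ≤ n) (c : K) : ∃ g : K⟦X⟧, coeff n (g * f) = c := by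
  refine ⟨C (c / coeff k f) * X ^ (n - k), ?_⟩
  rw [mul_assoc, coeff_C_mul, coeff_X_pow_mul', if_pos (Nat.sub_le n k), Nat.sub_sub_self hkn,
    div_mul_cancel₀ c hf]

noncomputable def quotCoeff {R : Type*} [CommRing R] (n : ℕ) :
    R⟦X⟧ ⧸ Ideal.span {(X : R⟦X⟧) ^ (n + 1)} →+ R :=
  QuotientAddGroup.lift _ (coeff n).toAddMonoidHom fun f hf => by
    obtain ⟨g, rfl⟩ := Ideal.mem_span_singleton'.mp hf
    simp [coeff_mul_X_pow']

@[simp]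
theorem quotCoeff_mk {R : Type*} [CommRing R] (n : ℕ) (f : R⟦X⟧) :
    quotCoeff n (Ideal.Quotient.mk _ f) = coeff n f :=
  rfl

theorem exists_quotCoeff_mul_eq_one {K : Type*} [Field K] {n : ℕ}
    {x : K⟦X⟧ ⧸ Ideal.span {(X : K⟦X⟧) ^ (n + 1)}} (hx : x ≠ 0) :
    ∃ y, quotCoeff n (y * x) = 1 := by
  obtain ⟨f, rfl⟩ := Ideal.Quotient.mk_surjective x
  have hf : ¬ X ^ (n + 1) ∣ f := by
    rwa [Ne, Ideal.Quotient.eq_zero_iff_mem, Ideal.mem_span_singleton] at hx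
  obtain ⟨k, hk, hfk⟩ : ∃ k < n + 1, coeff k f ≠ 0 := by
    simpa [X_pow_dvd_iff] using hf
  obtain ⟨g, hg⟩ := exists_coeff_mul_eq hfk (Nat.lt_succ_iff.mp hk) 1
  exact ⟨Ideal.Quotient.mk _ g, by rw [← map_mul, quotCoeff_mk, hg]⟩

end PowerSeries

/-- Let `p` be a prime and `𝔽_q` a finite field of characteristic `p` (so `q` is a power
of `p`). For every nonzero ideal `I` of the formal power series ring `𝔽_q⟦X⟧`, the
quotient `𝔽_q⟦X⟧/I` is a finite symmetric `𝔽_p`-algebra. -/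
theorem powerSeries_quotient_symmetric (p : ℕ) [Fact p.Prime]
    (Fq : Type*) [Field Fq] [Fintype Fq] [CharP Fq p]
    (I : Ideal (PowerSeries Fq)) (hI : I ≠ ⊥) :
    Finite (PowerSeries Fq ⧸ I) ∧
    ∃ ψ : (PowerSeries Fq ⧸ I) →+ ZMod p,
      ∀ J : Ideal (PowerSeries Fq ⧸ I), (∀ x ∈ J, ψ x = 0) → J = ⊥ := by
  refine ⟨IsDiscreteValuationRing.finite_quotient hI, ?_⟩
  obtain ⟨a, rfl⟩ := IsDiscreteValuationRing.ideal_eq_span_pow_irreducible hI X_irreducible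
  cases a with
  | zero =>
    have : Subsingleton (Fq⟦X⟧ ⧸ Ideal.span {(X : Fq⟦X⟧) ^ 0}) := by
      simp
    exact ⟨0, fun J _ => Subsingleton.elim _ _⟩
  | succ n =>
    obtain ⟨l, hl⟩ := exists_addMonoidHom_zmod_apply_one p Fq
    refine ⟨l.comp (quotCoeff n), fun J => Ideal.eq_bot_of_forall_exists_mul_ne_zero _ ?_⟩
    intro x hx
    obtain ⟨y, hy⟩ := exists_quotCoeff_mul_eq_one hx
    exact ⟨y, by simp [hy, hl]⟩
end

section
/- Let K be a number field with ring of integers 𝒪_K, let I ⊆ 𝒪_K be a nonzero ideal, and let n be the positive integer with I ∩ ℤ = nℤ. Let χ : (𝒪_K/I)ˣ → ℂˣ be a group homomorphism with χ(-1) = 1, and let P_χ = Γ(𝒪_K/I, ker χ) be the Paley graph associated with χ, where ker χ = { a ∈ (𝒪_K/I)ˣ : χ(a) = 1 } is viewed as a subset of 𝒪_K/I. Then P_χ is an integral graph if and only if the induced character of (ℤ/n)ˣ is trivial, i.e., χ(ι(u)) = 1 for every u ∈ (ℤ/n)ˣ, where ι : ℤ/n → 𝒪_K/I is the canonical ring homomorphism.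 -/
set_option synthInstance.maxHeartbeats 1000000
set_option maxHeartbeats 1000000

open NumberField

/-!
The additive characters `ψ` of a finite ring `R` form an eigenbasis of the adjacency matrix of
`Γ(R, S)`, with eigenvalues `λ_ψ(S) = ∑_{s ∈ S} ψ s`. When `n = 0` in `R` these are sums of `n`-th
roots of unity, and such a sum is a rational integer iff it is fixed by `Gal(ℚ(ζₙ)/ℚ) ≃ (ℤ/n)ˣ`,
where `u` acts by `ψ s ↦ ψ s ^ u = ψ (u s)`. So `Γ(R, S)` is integral iff `λ_ψ(u S) = λ_ψ(S)` for
all `ψ` and `u`, i.e. (characters separate subsets) iff `u S = S` for all `u ∈ (ℤ/n)ˣ`. For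
`S = ker χ`, a subgroup of units, this says exactly that `χ (ι u) = 1`.
-/

open Polynomial Matrix

theorem IsGalois.exists_intCast_eq_iff {E : Type*} [Field E] [Algebra ℚ E]
    [FiniteDimensional ℚ E] [IsGalois ℚ E] {y : E} (hy : IsIntegral ℤ y) :
    (∃ m : ℤ, (m : E) = y) ↔ ∀ σ : Gal(E/ℚ), σ y = y := by
  rw [← IsGalois.mem_bot_iff_fixed, IntermediateField.mem_bot]
  constructor
  · rintro ⟨m, rfl⟩
    exact ⟨m, map_intCast _ m⟩
  · rintro ⟨q, rfl⟩
    have hq : IsIntegral ℤ q := (isIntegral_algebraMap_iff (algebraMap ℚ E).injective).mp hy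
    obtain ⟨m, rfl⟩ := IsIntegrallyClosed.isIntegral_iff.mp hq
    exact ⟨m, by simp⟩

theorem IsCyclotomicExtension.forall_algEquiv_sum_zeta_pow_iff {L : Type*} [Field L]
    [Algebra ℚ L] {n : ℕ} [NeZero n] [IsCyclotomicExtension {n} ℚ L] {ι : Type*} (F : Finset ι)
    (a : ι → ℕ) :
    (∀ σ : Gal(L/ℚ), σ (∑ s ∈ F, zeta n ℚ L ^ a s) = ∑ s ∈ F, zeta n ℚ L ^ a s) ↔
      ∀ u : (ZMod n)ˣ,
        ∑ s ∈ F, (zeta n ℚ L ^ (u : ZMod n).val) ^ a s = ∑ s ∈ F, zeta n ℚ L ^ a s := by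
  let e : Gal(L/ℚ) ≃* (ZMod n)ˣ := autEquivPow L (cyclotomic.irreducible_rat (NeZero.pos n))
  have hσ : ∀ σ : Gal(L/ℚ), σ (∑ s ∈ F, zeta n ℚ L ^ a s) =
      ∑ s ∈ F, (zeta n ℚ L ^ (e σ : ZMod n).val) ^ a s := by
    intro σ
    simp [e, autEquivPow_apply, IsPrimitiveRoot.autToPow_spec]
  simp only [hσ]
  refine ⟨fun h u => ?_, fun h σ => h (e σ)⟩
  obtain ⟨σ, rfl⟩ := e.surjective u
  exact h σ

theorem IsCyclotomicExtension.exists_intCast_eq_sum_zeta_pow_iff {L : Type*} [Field L]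
    [Algebra ℚ L] {n : ℕ} [NeZero n] [IsCyclotomicExtension {n} ℚ L] {ι : Type*} (F : Finset ι)
    (a : ι → ℕ) :
    (∃ m : ℤ, (m : L) = ∑ s ∈ F, zeta n ℚ L ^ a s) ↔
      ∀ u : (ZMod n)ˣ,
        ∑ s ∈ F, (zeta n ℚ L ^ (u : ZMod n).val) ^ a s = ∑ s ∈ F, zeta n ℚ L ^ a s := by
  have := isGalois {n} ℚ L
  have := finiteDimensional {n} ℚ L
  have hint : IsIntegral ℤ (∑ s ∈ F, zeta n ℚ L ^ a s) :=
    IsIntegral.sum _ fun s _ => ((zeta_spec n ℚ L).isIntegral (NeZero.pos n)).pow _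
  exact (IsGalois.exists_intCast_eq_iff hint).trans (forall_algEquiv_sum_zeta_pow_iff F a)

theorem sum_rootsOfUnity_mem_range_intCast_iff {ι : Type*} (F : Finset ι) {c : ι → ℂ} {n : ℕ}
    [NeZero n] (hc : ∀ s, c s ^ n = 1) :
    ∑ s ∈ F, c s ∈ Set.range ((↑) : ℤ → ℂ) ↔
      ∀ u : (ZMod n)ˣ, ∑ s ∈ F, c s ^ (u : ZMod n).val = ∑ s ∈ F, c s := by
  -- Instance search finds `DivisionRing.toRatAlgebra`, for which the cyclotomic instance fails.
  let _ : Algebra ℚ (CyclotomicField n ℚ) := CyclotomicField.algebra n ℚ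
  let z := IsCyclotomicExtension.zeta n ℚ (CyclotomicField n ℚ)
  have hz : IsPrimitiveRoot z n := IsCyclotomicExtension.zeta_spec n ℚ _
  obtain ⟨φ⟩ : Nonempty (CyclotomicField n ℚ →ₐ[ℚ] ℂ) := ⟨IsAlgClosed.lift⟩
  have hφ_inj : Function.Injective φ := φ.injective
  choose a _ ha using fun s => (hz.map_of_injective hφ_inj).eq_pow_of_pow_eq_one (hc s)
  have hφ : ∀ k : ℕ, φ (∑ s ∈ F, (z ^ k) ^ a s) = ∑ s ∈ F, c s ^ k := by
    intro k
    simp [← ha, ← pow_mul, mul_comm]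
  have hφ1 : φ (∑ s ∈ F, z ^ a s) = ∑ s ∈ F, c s := by simpa using hφ 1
  simp only [← hφ, ← hφ1, Set.mem_range, ← map_intCast φ, hφ_inj.eq_iff]
  exact IsCyclotomicExtension.exists_intCast_eq_sum_zeta_pow_iff (n := n)
    (L := CyclotomicField n ℚ) F a

section AddChar

variable {R : Type*} [Ring R]

theorem AddChar.pow_eq_one_of_natCast_eq_zero {n : ℕ} (hn : (n : R) = 0) (ψ : AddChar R ℂ)
    (x : R) : ψ x ^ n = 1 := by
  rw [← AddChar.mulShift_spec', hn, AddChar.mulShift_apply, zero_mul, AddChar.map_zero_eq_one]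

theorem AddChar.mulShift_map_zmod_apply {n : ℕ} [NeZero n] (ι : ZMod n →+* R) (ψ : AddChar R ℂ)
    (a : ZMod n) (x : R) : ψ.mulShift (ι a) x = ψ x ^ a.val := by
  rw [← AddChar.mulShift_spec', ← map_natCast ι, ZMod.natCast_zmod_val]

end AddChar

section CayleyGraph

variable {R : Type*} [Ring R] [Fintype R]

noncomputable def cayleyEigenvalue (S : Set R) (ψ : AddChar R ℂ) : ℂ := ∑ a, S.indicator ψ a

theorem cayleyAdj_mulVec_addChar (S : Set R) (ψ : AddChar R ℂ) :
    cayleyAdj S *ᵥ ⇑ψ = cayleyEigenvalue S ψ • ⇑ψ := by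
  ext a
  calc (cayleyAdj S *ᵥ ⇑ψ) a = ∑ c, S.indicator (fun _ => (1 : ℂ)) c * ψ (a + c) :=
        (Fintype.sum_equiv (Equiv.addLeft a) _ _ fun c => by simp [cayleyAdj]).symm
    _ = ∑ c, ψ a * S.indicator ψ c := by
        refine Fintype.sum_congr _ _ fun c => ?_
        by_cases hc : c ∈ S <;> simp [hc, AddChar.map_add_eq_mul]
    _ = (cayleyEigenvalue S ψ • ⇑ψ) a := by
        rw [← Finset.mul_sum, cayleyEigenvalue, Pi.smul_apply, smul_eq_mul, mul_comm]

theorem spectrum_cayleyAdj_s18 [DecidableEq R] (S : Set R) :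
    spectrum ℂ (cayleyAdj S) = Set.range (cayleyEigenvalue S) := by
  let B := AddChar.complexBasis R
  have hdiag :
      LinearMap.toMatrixAlgEquiv B (toLin' (cayleyAdj S)) = diagonal (cayleyEigenvalue S) := by
    ext ψ χ
    have hrepr : B.repr χ = Finsupp.single χ 1 := by simpa [B] using B.repr_self χ
    rcases eq_or_ne ψ χ with rfl | h <;>
      simp [LinearMap.toMatrixAlgEquiv_apply, B, cayleyAdj_mulVec_addChar, *]
  rw [← spectrum_toLin', ← AlgEquiv.spectrum_eq (LinearMap.toMatrixAlgEquiv B), hdiag,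
    spectrum_diagonal]

theorem isIntegralCayley_iff_forall_cayleyEigenvalue (S : Set R) :
    IsIntegralCayley S ↔ ∀ ψ, cayleyEigenvalue S ψ ∈ Set.range ((↑) : ℤ → ℂ) := by
  classical
  rw [IsIntegralCayley, spectrum_cayleyAdj_s18, Set.range_subset_iff]

theorem cayleyEigenvalue_eq_sum_filter (S : Set R) [DecidablePred (· ∈ S)] (ψ : AddChar R ℂ) :
    cayleyEigenvalue S ψ = ∑ a with a ∈ S, ψ a :=
  Finset.sum_indicator_eq_sum_filter _ _ _ _

theorem cayleyEigenvalue_eq_linearCombination (S : Set R) (ψ : AddChar R ℂ) :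
    cayleyEigenvalue S ψ = Fintype.linearCombination ℂ (S.indicator 1) ⇑ψ := by
  simp only [cayleyEigenvalue, Fintype.linearCombination_apply]
  refine Fintype.sum_congr _ _ fun a => ?_
  by_cases ha : a ∈ S <;> simp [ha]

theorem eq_of_forall_cayleyEigenvalue_eq {S T : Set R}
    (h : ∀ ψ, cayleyEigenvalue S ψ = cayleyEigenvalue T ψ) : S = T := by
  classical
  have hℓ : Fintype.linearCombination ℂ (S.indicator (1 : R → ℂ)) =
      Fintype.linearCombination ℂ (T.indicator (1 : R → ℂ)) :=
    (AddChar.complexBasis R).ext fun ψ => by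
      simpa [cayleyEigenvalue_eq_linearCombination] using h ψ
  refine Set.indicator_one_inj ℂ (funext fun x => ?_)
  simpa [Fintype.linearCombination_apply_single] using congr($hℓ (Pi.single x 1))

open Pointwise in
theorem cayleyEigenvalue_units_smul (v : Rˣ) (S : Set R) (ψ : AddChar R ℂ) :
    cayleyEigenvalue (v • S) ψ = cayleyEigenvalue S (ψ.mulShift v) := by
  refine (Fintype.sum_equiv (Units.mulLeft v) _ _ fun b => ?_).symm
  have hmem : (v : R) * b ∈ v • S ↔ b ∈ S := Set.smul_mem_smul_set_iff
  by_cases hb : b ∈ S <;> simp [hb, hmem]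

open Pointwise in
theorem isIntegralCayley_iff_forall_units_smul_eq {n : ℕ} [NeZero n] (ι : ZMod n →+* R)
    (S : Set R) : IsIntegralCayley S ↔ ∀ u : (ZMod n)ˣ, Units.map (ι : ZMod n →* R) u • S = S := by
  classical
  have hn : (n : R) = 0 := by rw [← map_natCast ι, ZMod.natCast_self, map_zero]
  have hψ : ∀ ψ, cayleyEigenvalue S ψ ∈ Set.range ((↑) : ℤ → ℂ) ↔
      ∀ u : (ZMod n)ˣ,
        cayleyEigenvalue (Units.map (ι : ZMod n →* R) u • S) ψ = cayleyEigenvalue S ψ := by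
    intro ψ
    simp only [cayleyEigenvalue_units_smul]
    simp only [cayleyEigenvalue_eq_sum_filter, Units.coe_map, MonoidHom.coe_coe,
      AddChar.mulShift_map_zmod_apply]
    exact sum_rootsOfUnity_mem_range_intCast_iff _ (AddChar.pow_eq_one_of_natCast_eq_zero hn ψ)
  simp only [isIntegralCayley_iff_forall_cayleyEigenvalue, hψ]
  rw [forall_comm]
  exact forall_congr' fun u => ⟨eq_of_forall_cayleyEigenvalue_eq, fun h ψ => by rw [h]⟩

end CayleyGraph

open Pointwise in
theorem Subgroup.units_smul_image_val_eq_iff {M : Type*} [Monoid M] (H : Subgroup Mˣ) (v : Mˣ) :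
    v • ((↑) '' (H : Set Mˣ) : Set M) = (↑) '' (H : Set Mˣ) ↔ v ∈ H := by
  constructor
  · intro h
    have hv : (v : M) ∈ v • ((↑) '' (H : Set Mˣ) : Set M) :=
      ⟨1, ⟨1, H.one_mem, rfl⟩, by simp⟩
    obtain ⟨w, hw, hwv⟩ := h ▸ hv
    exact Units.ext hwv ▸ hw
  · intro hv
    have h := Set.image_smul_distrib (Units.coeHom M) v (H : Set Mˣ)
    rw [smul_coe_set hv] at h
    exact h.symm

theorem paley_integral_iff_general (K : Type*) [Field K]
    (I : Ideal (𝓞 K)) [Fintype ((𝓞 K) ⧸ I)]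
    (n : ℕ) (hn : 0 < n)
    (χ : ((𝓞 K) ⧸ I)ˣ →* ℂˣ)
    (ι : ZMod n →+* ((𝓞 K) ⧸ I)) :
    IsIntegralCayley ((fun u : ((𝓞 K) ⧸ I)ˣ => (u : (𝓞 K) ⧸ I)) '' {u | χ u = 1}) ↔
      ∀ u : (ZMod n)ˣ, χ (Units.map (ι : ZMod n →* ((𝓞 K) ⧸ I)) u) = 1 := by
  have := NeZero.of_pos hn
  rw [isIntegralCayley_iff_forall_units_smul_eq ι]
  exact forall_congr' fun u => χ.ker.units_smul_image_val_eq_iff _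

/-- Let `K` be a number field, `I ⊆ 𝒪_K` a nonzero ideal with `I ∩ ℤ = nℤ`, and
`χ : (𝒪_K/I)ˣ → ℂˣ` a character with `χ(-1) = 1`. The Paley graph
`P_χ = Γ(𝒪_K/I, ker χ)` is integral iff the induced character of `(ZMod n)ˣ` is trivial,
i.e. `χ (ι u) = 1` for every unit `u` of `ZMod n`, where `ι : ZMod n →+* 𝒪_K/I` is the
canonical ring homomorphism (characterized by compatibility with `ℤ → 𝒪_K/I`). -/
theorem paley_integral_iff (K : Type*) [Field K] [NumberField K]
    (I : Ideal (𝓞 K)) (hI : I ≠ ⊥) [Fintype ((𝓞 K) ⧸ I)]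
    (n : ℕ) (hn : 0 < n)
    (hnI : Ideal.comap (algebraMap ℤ (𝓞 K)) I = Ideal.span {(n : ℤ)})
    (χ : ((𝓞 K) ⧸ I)ˣ →* ℂˣ) (hχ : χ (-1) = 1)
    (ι : ZMod n →+* ((𝓞 K) ⧸ I)) (hι : ∀ k : ℤ, ι ((k : ℤ) : ZMod n) = ((k : ℤ) : (𝓞 K) ⧸ I)) :
    IsIntegralCayley ((fun u : ((𝓞 K) ⧸ I)ˣ => (u : (𝓞 K) ⧸ I)) '' {u | χ u = 1}) ↔
      ∀ u : (ZMod n)ˣ, χ (Units.map (ι : ZMod n →* ((𝓞 K) ⧸ I)) u) = 1 :=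
  paley_integral_iff_general K I n hn χ ι
end
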